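/- For any symmetric real 3×3 matrices B₁, B₂, let ρ_B be the maximum entropy state on SO(3), i.e. the probability density ρ_B(q) = Z⁻¹ exp(B₁·(m₁(q)m₁(q)ᵀ) + B₂·(m₂(q)m₂(q)ᵀ)) with respect to the Haar probability measure μ, where Z = ∫_{SO(3)} exp(B₁·(m₁m₁ᵀ) + B₂·(m₂m₂ᵀ)) dμ. Then the covariance bilinear form of the second-moment functions is positive definite: for every nonzero pair (Y₁,Y₂) ∈ 𝔔, setting φ(q) = Y₁·(m₁(q)m₁(q)ᵀ) + Y₂·(m₂(q)m₂(q)ᵀ), one has ∫_{SO(3)} φ² ρ_B dμ − (∫_{SO(3)} φ ρ_B dμ)² > 0. Equivalently, the Jacobian ∂Q/∂B of the moment map B ↦ (⟨m₁² − I/3⟩, ⟨m₂² − I/3⟩) is positive definite. -/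

import Mathlib

/- STATEMENT 4: For symmetric B₁, B₂, the maximum entropy state
ρ_B(q) = Z⁻¹ exp(B₁·m₁m₁ᵀ + B₂·m₂m₂ᵀ) on SO(3) (with respect to the Haar probability
measure μ) has positive definite covariance of the second-moment functions: for every
nonzero symmetric traceless pair (Y₁,Y₂), with φ(q) = Y₁·m₁m₁ᵀ + Y₂·m₂m₂ᵀ, one has
∫ φ² ρ_B dμ − (∫ φ ρ_B dμ)² > 0. -/

noncomputable section

open Matrix MeasureTheory

abbrev Mat3 := Matrix (Fin 3) (Fin 3) ℝ

/-- SO(3) as a (multiplicative) submonoid of the 3×3 real matrices. -/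
def SO3 : Submonoid Mat3 where
  carrier := {q | q * qᵀ = 1 ∧ q.det = 1}
  one_mem' := by constructor <;> simp
  mul_mem' := by
    rintro a b ⟨ha1, ha2⟩ ⟨hb1, hb2⟩
    constructor
    · have : a * b * (a * b)ᵀ = a * (b * bᵀ) * aᵀ := by
        rw [Matrix.transpose_mul]
        noncomm_ring
      rw [this, hb1, mul_one, ha1]
    · rw [Matrix.det_mul, ha2, hb2, mul_one]

/-- The exponent B₁·(m₁m₁ᵀ) + B₂·(m₂m₂ᵀ), where m₁, m₂ are the first two columns of q. -/
def expnt (B₁ B₂ : Mat3) (q : SO3) : ℝ :=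
  ∑ j, ∑ k, (B₁ j k * (q : Mat3) j 0 * (q : Mat3) k 0
    + B₂ j k * (q : Mat3) j 1 * (q : Mat3) k 1)

/-- The normalizing constant Z. -/
def ZZ [MeasurableSpace SO3] (B₁ B₂ : Mat3) (μ : Measure SO3) : ℝ :=
  ∫ q, Real.exp (expnt B₁ B₂ q) ∂μ

/-- The maximum entropy state (density with respect to μ). -/
def rho [MeasurableSpace SO3] (B₁ B₂ : Mat3) (μ : Measure SO3) (q : SO3) : ℝ :=
  Real.exp (expnt B₁ B₂ q) / ZZ B₁ B₂ μ

/-- φ(q) = Y₁·(m₁m₁ᵀ) + Y₂·(m₂m₂ᵀ). -/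
def phi (Y₁ Y₂ : Mat3) (q : SO3) : ℝ :=
  ∑ j, ∑ k, (Y₁ j k * (q : Mat3) j 0 * (q : Mat3) k 0
    + Y₂ j k * (q : Mat3) j 1 * (q : Mat3) k 1)

/- ------------------ auxiliary lemmas ------------------ -/

lemma mem_SO3 (q : Mat3) : q ∈ SO3 ↔ q * qᵀ = 1 ∧ q.det = 1 := Iff.rfl

lemma isCompact_so3 : IsCompact (SO3 : Set Mat3) := by
  have hcl : IsClosed (SO3 : Set Mat3) := by
    have h1 : Continuous fun q : Mat3 => q * qᵀ :=
      continuous_id.matrix_mul continuous_id.matrix_transpose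
    have h2 : Continuous fun q : Mat3 => q.det := continuous_id.matrix_det
    have : (SO3 : Set Mat3) = (fun q : Mat3 => (q * qᵀ, q.det)) ⁻¹' {((1 : Mat3), (1 : ℝ))} := by
      ext q; simp [mem_SO3, Prod.ext_iff]
    rw [this]
    exact isClosed_singleton.preimage (h1.prodMk h2)
  refine IsCompact.of_isClosed_subset (isCompact_univ_pi fun i =>
    (isCompact_univ_pi fun j => isCompact_Icc (a := (-1 : ℝ)) (b := 1))) hcl ?_
  intro q hq
  have h1 := ((mem_SO3 q).mp hq).1
  refine Set.mem_univ_pi.2 fun i => Set.mem_univ_pi.2 fun j => ?_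
  have hd : ∑ k, q i k * q i k = 1 := by
    have := congrArg (fun A => A i i) h1
    simpa [Matrix.mul_apply, Matrix.one_apply] using this
  have hle : q i j * q i j ≤ 1 := by
    rw [← hd]
    exact Finset.single_le_sum (f := fun k => q i k * q i k)
      (fun k _ => mul_self_nonneg _) (Finset.mem_univ j)
  exact ⟨by nlinarith, by nlinarith⟩

instance : CompactSpace SO3 := isCompact_iff_compactSpace.mp isCompact_so3

instance : Nonempty SO3 := ⟨1⟩

lemma cont_entry (j k : Fin 3) : Continuous fun q : SO3 => (q : Mat3) j k :=
  (continuous_apply k).comp ((continuous_apply j).comp continuous_subtype_val)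

lemma cont_phi (Y₁ Y₂ : Mat3) : Continuous (phi Y₁ Y₂) := by
  unfold phi
  exact continuous_finset_sum _ fun j _ => continuous_finset_sum _ fun k _ =>
    (((continuous_const.mul (cont_entry j 0)).mul (cont_entry k 0)).add
      ((continuous_const.mul (cont_entry j 1)).mul (cont_entry k 1)))

lemma cont_expnt (B₁ B₂ : Mat3) : Continuous (expnt B₁ B₂) := cont_phi B₁ B₂

lemma integrable_of_continuous [MeasurableSpace SO3] [BorelSpace SO3]
    (μ : Measure SO3) [IsFiniteMeasure μ] {f : SO3 → ℝ} (hf : Continuous f) :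
    Integrable f μ :=
  hf.integrable_of_hasCompactSupport
    (IsCompact.of_isClosed_subset isCompact_univ (isClosed_tsupport f) (Set.subset_univ _))

lemma ZZ_pos [MeasurableSpace SO3] [BorelSpace SO3] (B₁ B₂ : Mat3)
    (μ : Measure SO3) [IsProbabilityMeasure μ] : 0 < ZZ B₁ B₂ μ := by
  obtain ⟨x₀, -, hx₀⟩ := isCompact_univ.exists_isMinOn Set.univ_nonempty
    (cont_expnt B₁ B₂).continuousOn
  have hle : Real.exp (expnt B₁ B₂ x₀) ≤ ZZ B₁ B₂ μ := by
    have := integral_mono (μ := μ) (integrable_const (Real.exp (expnt B₁ B₂ x₀)))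
      (integrable_of_continuous μ (Real.continuous_exp.comp (cont_expnt B₁ B₂)))
      (fun x => Real.exp_le_exp.2 (hx₀ (Set.mem_univ x)))
    simpa [ZZ] using this
  exact lt_of_lt_of_le (Real.exp_pos _) hle

/-- The inverse (transpose) of an element of SO3. -/
def so3inv (g : SO3) : SO3 :=
  ⟨(g : Mat3)ᵀ, by
    rw [mem_SO3, Matrix.transpose_transpose]
    refine ⟨?_, by rw [Matrix.det_transpose]; exact g.2.2⟩
    exact mul_eq_one_comm.mp g.2.1⟩

lemma so3inv_mul (g : SO3) : so3inv g * g = 1 := by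
  apply Subtype.ext
  show (g : Mat3)ᵀ * (g : Mat3) = 1
  exact mul_eq_one_comm.mp g.2.1

lemma isOpenPos [MeasurableSpace SO3] [BorelSpace SO3]
    (μ : Measure SO3) [IsProbabilityMeasure μ]
    (hinv : ∀ g : SO3, Measure.map (fun q => g * q) μ = μ) :
    μ.IsOpenPosMeasure := by
  constructor
  intro U hU hUne hU0
  obtain ⟨u, hu⟩ := hUne
  have hcont : ∀ g : SO3, Continuous fun q : SO3 => g * q := fun g =>
    continuous_const.mul continuous_id
  have hcover : (Set.univ : Set SO3) ⊆ ⋃ g : SO3, (fun q => g * q) ⁻¹' U := by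
    intro x _
    refine Set.mem_iUnion.2 ⟨u * so3inv x, ?_⟩
    show (u * so3inv x) * x ∈ U
    rw [mul_assoc, so3inv_mul, mul_one]
    exact hu
  obtain ⟨t, ht⟩ := isCompact_univ.elim_finite_subcover
    (fun g : SO3 => (fun q => g * q) ⁻¹' U) (fun g => hU.preimage (hcont g)) hcover
  have hmeas : ∀ g : SO3, μ ((fun q => g * q) ⁻¹' U) = μ U := by
    intro g
    have := hinv g
    conv_rhs => rw [← this]
    rw [Measure.map_apply ((hcont g).measurable) hU.measurableSet]
  have h1 : (1 : ENNReal) = μ Set.univ := (measure_univ).symm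
  have hle : μ Set.univ ≤ ∑ g ∈ t, μ ((fun q => g * q) ⁻¹' U) :=
    le_trans (measure_mono ht) (measure_biUnion_finset_le t _)
  rw [← h1] at hle
  simp only [hmeas, hU0, Finset.sum_const, smul_zero] at hle
  exact (by norm_num : ¬((1 : ENNReal) ≤ 0)) hle

/- Evaluate phi at explicit rotations. -/

section phiEval

variable (Y₁ Y₂ : Mat3)

lemma memP1 : (!![(1:ℝ),0,0; 0,1,0; 0,0,1] : Mat3) ∈ SO3 := by
  rw [mem_SO3]
  refine ⟨?_, by norm_num [Matrix.det_fin_three, Matrix.cons_val_two, Matrix.vecHead, Matrix.vecTail]⟩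
  rw [show (!![(1:ℝ),0,0; 0,1,0; 0,0,1] : Mat3)ᵀ = !![(1:ℝ),0,0; 0,1,0; 0,0,1]
    from by ext i j; fin_cases i <;> fin_cases j <;> rfl, Matrix.one_fin_three]
  norm_num [Matrix.mul_fin_three]

lemma memP2 : (!![(1:ℝ),0,0; 0,0,-1; 0,1,0] : Mat3) ∈ SO3 := by
  rw [mem_SO3]
  refine ⟨?_, by norm_num [Matrix.det_fin_three, Matrix.cons_val_two, Matrix.vecHead, Matrix.vecTail]⟩
  rw [show (!![(1:ℝ),0,0; 0,0,-1; 0,1,0] : Mat3)ᵀ = !![(1:ℝ),0,0; 0,0,1; 0,-1,0]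
    from by ext i j; fin_cases i <;> fin_cases j <;> rfl, Matrix.one_fin_three]
  norm_num [Matrix.mul_fin_three]

lemma memP3 : (!![(0:ℝ),1,0; 1,0,0; 0,0,-1] : Mat3) ∈ SO3 := by
  rw [mem_SO3]
  refine ⟨?_, by norm_num [Matrix.det_fin_three, Matrix.cons_val_two, Matrix.vecHead, Matrix.vecTail]⟩
  rw [show (!![(0:ℝ),1,0; 1,0,0; 0,0,-1] : Mat3)ᵀ = !![(0:ℝ),1,0; 1,0,0; 0,0,-1]
    from by ext i j; fin_cases i <;> fin_cases j <;> rfl, Matrix.one_fin_three]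
  norm_num [Matrix.mul_fin_three]

lemma memP4 : (!![(0:ℝ),0,1; 1,0,0; 0,1,0] : Mat3) ∈ SO3 := by
  rw [mem_SO3]
  refine ⟨?_, by norm_num [Matrix.det_fin_three, Matrix.cons_val_two, Matrix.vecHead, Matrix.vecTail]⟩
  rw [show (!![(0:ℝ),0,1; 1,0,0; 0,1,0] : Mat3)ᵀ = !![(0:ℝ),1,0; 0,0,1; 1,0,0]
    from by ext i j; fin_cases i <;> fin_cases j <;> rfl, Matrix.one_fin_three]
  norm_num [Matrix.mul_fin_three]

lemma memP5 : (!![(0:ℝ),1,0; 0,0,1; 1,0,0] : Mat3) ∈ SO3 := by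
  rw [mem_SO3]
  refine ⟨?_, by norm_num [Matrix.det_fin_three, Matrix.cons_val_two, Matrix.vecHead, Matrix.vecTail]⟩
  rw [show (!![(0:ℝ),1,0; 0,0,1; 1,0,0] : Mat3)ᵀ = !![(0:ℝ),0,1; 1,0,0; 0,1,0]
    from by ext i j; fin_cases i <;> fin_cases j <;> rfl, Matrix.one_fin_three]
  norm_num [Matrix.mul_fin_three]

lemma memP6 : (!![(0:ℝ),0,-1; 0,1,0; 1,0,0] : Mat3) ∈ SO3 := by
  rw [mem_SO3]
  refine ⟨?_, by norm_num [Matrix.det_fin_three, Matrix.cons_val_two, Matrix.vecHead, Matrix.vecTail]⟩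
  rw [show (!![(0:ℝ),0,-1; 0,1,0; 1,0,0] : Mat3)ᵀ = !![(0:ℝ),0,1; 0,1,0; -1,0,0]
    from by ext i j; fin_cases i <;> fin_cases j <;> rfl, Matrix.one_fin_three]
  norm_num [Matrix.mul_fin_three]

lemma memR1 : (!![(3:ℝ)/5,-4/5,0; 4/5,3/5,0; 0,0,1] : Mat3) ∈ SO3 := by
  rw [mem_SO3]
  refine ⟨?_, by norm_num [Matrix.det_fin_three, Matrix.cons_val_two, Matrix.vecHead, Matrix.vecTail]⟩
  rw [show (!![(3:ℝ)/5,-4/5,0; 4/5,3/5,0; 0,0,1] : Mat3)ᵀ = !![(3:ℝ)/5,4/5,0; -4/5,3/5,0; 0,0,1]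
    from by ext i j; fin_cases i <;> fin_cases j <;> rfl, Matrix.one_fin_three]
  norm_num [Matrix.mul_fin_three]

lemma memR2 : (!![(3:ℝ)/5,0,4/5; 4/5,0,-3/5; 0,1,0] : Mat3) ∈ SO3 := by
  rw [mem_SO3]
  refine ⟨?_, by norm_num [Matrix.det_fin_three, Matrix.cons_val_two, Matrix.vecHead, Matrix.vecTail]⟩
  rw [show (!![(3:ℝ)/5,0,4/5; 4/5,0,-3/5; 0,1,0] : Mat3)ᵀ = !![(3:ℝ)/5,4/5,0; 0,0,1; 4/5,-3/5,0]
    from by ext i j; fin_cases i <;> fin_cases j <;> rfl, Matrix.one_fin_three]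
  norm_num [Matrix.mul_fin_three]

lemma memR3 : (!![(3:ℝ)/5,-4/5,0; 0,0,-1; 4/5,3/5,0] : Mat3) ∈ SO3 := by
  rw [mem_SO3]
  refine ⟨?_, by norm_num [Matrix.det_fin_three, Matrix.cons_val_two, Matrix.vecHead, Matrix.vecTail]⟩
  rw [show (!![(3:ℝ)/5,-4/5,0; 0,0,-1; 4/5,3/5,0] : Mat3)ᵀ = !![(3:ℝ)/5,0,4/5; -4/5,0,3/5; 0,-1,0]
    from by ext i j; fin_cases i <;> fin_cases j <;> rfl, Matrix.one_fin_three]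
  norm_num [Matrix.mul_fin_three]

lemma memR4 : (!![(3:ℝ)/5,0,-4/5; 0,1,0; 4/5,0,3/5] : Mat3) ∈ SO3 := by
  rw [mem_SO3]
  refine ⟨?_, by norm_num [Matrix.det_fin_three, Matrix.cons_val_two, Matrix.vecHead, Matrix.vecTail]⟩
  rw [show (!![(3:ℝ)/5,0,-4/5; 0,1,0; 4/5,0,3/5] : Mat3)ᵀ = !![(3:ℝ)/5,0,4/5; 0,1,0; -4/5,0,3/5]
    from by ext i j; fin_cases i <;> fin_cases j <;> rfl, Matrix.one_fin_three]
  norm_num [Matrix.mul_fin_three]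

lemma memR5 : (!![(0:ℝ),0,1; 3/5,-4/5,0; 4/5,3/5,0] : Mat3) ∈ SO3 := by
  rw [mem_SO3]
  refine ⟨?_, by norm_num [Matrix.det_fin_three, Matrix.cons_val_two, Matrix.vecHead, Matrix.vecTail]⟩
  rw [show (!![(0:ℝ),0,1; 3/5,-4/5,0; 4/5,3/5,0] : Mat3)ᵀ = !![(0:ℝ),3/5,4/5; 0,-4/5,3/5; 1,0,0]
    from by ext i j; fin_cases i <;> fin_cases j <;> rfl, Matrix.one_fin_three]
  norm_num [Matrix.mul_fin_three]

lemma memR6 : (!![(0:ℝ),1,0; 3/5,0,4/5; 4/5,0,-3/5] : Mat3) ∈ SO3 := by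
  rw [mem_SO3]
  refine ⟨?_, by norm_num [Matrix.det_fin_three, Matrix.cons_val_two, Matrix.vecHead, Matrix.vecTail]⟩
  rw [show (!![(0:ℝ),1,0; 3/5,0,4/5; 4/5,0,-3/5] : Mat3)ᵀ = !![(0:ℝ),3/5,4/5; 1,0,0; 0,4/5,-3/5]
    from by ext i j; fin_cases i <;> fin_cases j <;> rfl, Matrix.one_fin_three]
  norm_num [Matrix.mul_fin_three]

end phiEval

set_option maxHeartbeats 2000000 in
lemma phi_not_const (Y₁ Y₂ : Mat3) (hY₁ : Y₁.IsSymm) (hY₁t : Y₁.trace = 0)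
    (hY₂ : Y₂.IsSymm) (hY₂t : Y₂.trace = 0) (hY : ¬(Y₁ = 0 ∧ Y₂ = 0))
    (m : ℝ) (h : ∀ q : SO3, phi Y₁ Y₂ q = m) : False := by
  have s101 := hY₁.apply 0 1
  have s102 := hY₁.apply 0 2
  have s112 := hY₁.apply 1 2
  have s201 := hY₂.apply 0 1
  have s202 := hY₂.apply 0 2
  have s212 := hY₂.apply 1 2
  rw [Matrix.trace_fin_three] at hY₁t hY₂t
  have e1 := h ⟨_, memP1⟩
  have e2 := h ⟨_, memP2⟩
  have e3 := h ⟨_, memP3⟩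
  have e4 := h ⟨_, memP4⟩
  have e5 := h ⟨_, memP5⟩
  have e6 := h ⟨_, memP6⟩
  have f1 := h ⟨_, memR1⟩
  have f2 := h ⟨_, memR2⟩
  have f3 := h ⟨_, memR3⟩
  have f4 := h ⟨_, memR4⟩
  have f5 := h ⟨_, memR5⟩
  have f6 := h ⟨_, memR6⟩
  simp only [phi, Fin.sum_univ_three] at e1 e2 e3 e4 e5 e6 f1 f2 f3 f4 f5 f6
  norm_num [Matrix.vecHead, Matrix.vecTail, Function.comp, Matrix.cons_val_two]
    at e1 e2 e3 e4 e5 e6 f1 f2 f3 f4 f5 f6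
  have a00 : Y₁ 0 0 = 0 := by linarith
  have a11 : Y₁ 1 1 = 0 := by linarith
  have a22 : Y₁ 2 2 = 0 := by linarith
  have b00 : Y₂ 0 0 = 0 := by linarith
  have b11 : Y₂ 1 1 = 0 := by linarith
  have b22 : Y₂ 2 2 = 0 := by linarith
  have a01 : Y₁ 0 1 = 0 := by linarith
  have b01 : Y₂ 0 1 = 0 := by linarith
  have a02 : Y₁ 0 2 = 0 := by linarith
  have b02 : Y₂ 0 2 = 0 := by linarith
  have a12 : Y₁ 1 2 = 0 := by linarith
  have b12 : Y₂ 1 2 = 0 := by linarith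
  have a10 : Y₁ 1 0 = 0 := by linarith
  have b10 : Y₂ 1 0 = 0 := by linarith
  have a20 : Y₁ 2 0 = 0 := by linarith
  have b20 : Y₂ 2 0 = 0 := by linarith
  have a21 : Y₁ 2 1 = 0 := by linarith
  have b21 : Y₂ 2 1 = 0 := by linarith
  refine hY ⟨?_, ?_⟩ <;> ext i j <;> fin_cases i <;> fin_cases j <;>
    simp only [Matrix.zero_apply] <;>
    first
      | exact a00 | exact a01 | exact a02 | exact a10 | exact a11 | exact a12
      | exact a20 | exact a21 | exact a22
      | exact b00 | exact b01 | exact b02 | exact b10 | exact b11 | exact b12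
      | exact b20 | exact b21 | exact b22

theorem covariance_posDef [MeasurableSpace SO3] [BorelSpace SO3]
    (μ : Measure SO3) [IsProbabilityMeasure μ]
    (hinv : ∀ g : SO3, Measure.map (fun q => g * q) μ = μ)
    (B₁ B₂ : Mat3) (hB₁ : B₁.IsSymm) (hB₂ : B₂.IsSymm)
    (Y₁ Y₂ : Mat3) (hY₁ : Y₁.IsSymm) (hY₁t : Y₁.trace = 0)
    (hY₂ : Y₂.IsSymm) (hY₂t : Y₂.trace = 0) (hY : ¬(Y₁ = 0 ∧ Y₂ = 0)) :
    0 < (∫ q, (phi Y₁ Y₂ q) ^ 2 * rho B₁ B₂ μ q ∂μ)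
        - (∫ q, phi Y₁ Y₂ q * rho B₁ B₂ μ q ∂μ) ^ 2 := by
  have hZ : 0 < ZZ B₁ B₂ μ := ZZ_pos B₁ B₂ μ
  have hρpos : ∀ q, 0 < rho B₁ B₂ μ q := fun q => div_pos (Real.exp_pos _) hZ
  have hρcont : Continuous (rho B₁ B₂ μ) :=
    (Real.continuous_exp.comp (cont_expnt B₁ B₂)).div_const _
  have hφcont := cont_phi Y₁ Y₂
  set f := phi Y₁ Y₂ with hf
  set ρ := rho B₁ B₂ μ with hρ
  have hint1 : Integrable (fun q => f q * ρ q) μ :=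
    integrable_of_continuous μ (hφcont.mul hρcont)
  have hint2 : Integrable (fun q => f q ^ 2 * ρ q) μ :=
    integrable_of_continuous μ ((hφcont.pow 2).mul hρcont)
  have hintρ : Integrable ρ μ := integrable_of_continuous μ hρcont
  have hρ1 : ∫ q, ρ q ∂μ = 1 := by
    simp only [hρ, rho]
    rw [integral_div]
    exact div_self hZ.ne'
  set m := ∫ q, f q * ρ q ∂μ with hm
  have expand : ∀ q, (f q - m) ^ 2 * ρ q
      = (f q ^ 2 * ρ q - (2 * m) * (f q * ρ q)) + m ^ 2 * ρ q := fun q => by ring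
  have hA : Integrable (fun q => f q ^ 2 * ρ q - (2 * m) * (f q * ρ q)) μ :=
    integrable_of_continuous μ (((hφcont.pow 2).mul hρcont).sub
      (continuous_const.mul (hφcont.mul hρcont)))
  have hB : Integrable (fun q => m ^ 2 * ρ q) μ :=
    integrable_of_continuous μ (continuous_const.mul hρcont)
  have hC : Integrable (fun q => (2 * m) * (f q * ρ q)) μ :=
    integrable_of_continuous μ (continuous_const.mul (hφcont.mul hρcont))
  have hI : ∫ q, (f q - m) ^ 2 * ρ q ∂μ = (∫ q, f q ^ 2 * ρ q ∂μ) - m ^ 2 := by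
    simp_rw [expand]
    rw [integral_add hA hB, integral_sub hint2 hC,
      integral_const_mul, integral_const_mul, hρ1, ← hm]
    ring
  rw [← hI]
  have hnonneg : ∀ q, 0 ≤ (f q - m) ^ 2 * ρ q := fun q =>
    mul_nonneg (sq_nonneg _) (hρpos q).le
  have hint3 : Integrable (fun q => (f q - m) ^ 2 * ρ q) μ :=
    integrable_of_continuous μ (((hφcont.sub continuous_const).pow 2).mul hρcont)
  rcases lt_or_eq_of_le (integral_nonneg (f := fun q => (f q - m) ^ 2 * ρ q) hnonneg) with hpos | heq
  · exact hpos
  · exfalso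
    have hae : (fun q => (f q - m) ^ 2 * ρ q) =ᵐ[μ] 0 :=
      (integral_eq_zero_iff_of_nonneg hnonneg hint3).mp heq.symm
    haveI : μ.IsOpenPosMeasure := isOpenPos μ hinv
    have hzero : (fun q => (f q - m) ^ 2 * ρ q) = 0 :=
      (Continuous.ae_eq_iff_eq μ
        (((hφcont.sub continuous_const).pow 2).mul hρcont) continuous_const).mp hae
    have hfm : ∀ q, f q = m := by
      intro q
      have := congrFun hzero q
      simp only [Pi.zero_apply] at this
      have h2 : (f q - m) ^ 2 = 0 := by
        by_contra hne
        exact hne (by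
          rcases mul_eq_zero.mp this with h | h
          · exact h
          · exact absurd h (hρpos q).ne')
      have := pow_eq_zero_iff (n := 2) (by norm_num) |>.mp h2
      linarith
    exact phi_not_const Y₁ Y₂ hY₁ hY₁t hY₂ hY₂t hY m hfm

end
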